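/- arXiv:math/0602583 — 6 statements merged into one kernel-verified Lean document; each statement's English description precedes it below -/
import Mathlib

section
/- A max-semi-stable distribution function of extended Fréchet type, F(x) = exp(−x^(−α) h(ln x)) for x > 0 (and F(x) = 0 for x ≤ 0), where h is positive, bounded, periodic with period ln b, b > 1, α > 0, is max-semi-selfdecomposable with scale b: there exists a distribution function H such that F(x) = F(bx)·H(x) for all x. Explicitly, H(x) = exp(−(1 − 1/a)·x^(−α) h(ln x)) with a = b^α > 1. -/
open Filter

def IsDF (F : ℝ → ℝ) : Prop :=
  Monotone F ∧ (∀ x, ContinuousWithinAt F (Set.Ici x) x) ∧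
    Tendsto F atBot (nhds 0) ∧ Tendsto F atTop (nhds 1)

theorem stmt3 (h : ℝ → ℝ) (b α : ℝ) (hb : 1 < b) (hα : 0 < α)
    (hpos : ∀ y : ℝ, 0 < h y) (hbdd : ∃ M : ℝ, ∀ y : ℝ, h y ≤ M)
    (hper : ∀ y : ℝ, h (y + Real.log b) = h y)
    (a : ℝ) (ha : a = b ^ α)
    (F : ℝ → ℝ)
    (hFdef : ∀ x : ℝ, F x = if 0 < x then Real.exp (-(x ^ (-α) * h (Real.log x))) else 0)
    (hF : IsDF F) :
    ∃ H : ℝ → ℝ, IsDF H ∧ (∀ x : ℝ, F x = F (b * x) * H x) ∧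
      (∀ x : ℝ, H x =
        if 0 < x then Real.exp (-((1 - 1 / a) * (x ^ (-α) * h (Real.log x)))) else 0) := by
  have hb0 : (0:ℝ) < b := lt_trans zero_lt_one hb
  have ha1 : 1 < a := by
    rw [ha]; exact (Real.one_lt_rpow_iff_of_pos hb0).mpr (Or.inl ⟨hb, hα⟩)
  have ha0 : 0 < a := lt_trans zero_lt_one ha1
  set c : ℝ := 1 - 1 / a with hcdef
  have hc : 0 < c := by
    have : 1 / a < 1 := (div_lt_one ha0).mpr ha1
    simp only [hcdef]; linarith
  have hFnn : ∀ x, 0 ≤ F x := by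
    intro x; rw [hFdef x]
    split
    · exact (Real.exp_pos _).le
    · exact le_refl 0
  refine ⟨fun x => F x ^ c, ?_, ?_, ?_⟩
  · obtain ⟨hmono, hcont, hbot, htop⟩ := hF
    refine ⟨?_, ?_, ?_, ?_⟩
    · intro x y hxy
      exact Real.rpow_le_rpow (hFnn x) (hmono hxy) hc.le
    · intro x
      exact (Real.continuousAt_rpow_const (F x) c (Or.inr hc.le)).comp_continuousWithinAt
        (hcont x)
    · have := (Real.continuousAt_rpow_const 0 c (Or.inr hc.le)).tendsto.comp hbot
      simpa [Real.zero_rpow hc.ne', Function.comp_def] using this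
    · have := (Real.continuousAt_rpow_const 1 c (Or.inr hc.le)).tendsto.comp htop
      simpa [Real.one_rpow, Function.comp_def] using this
  · intro x
    by_cases hx : 0 < x
    · have hbx : 0 < b * x := mul_pos hb0 hx
      have hlog : Real.log (b * x) = Real.log x + Real.log b := by
        rw [Real.log_mul hb0.ne' hx.ne']; ring
      have hrw : (b * x) ^ (-α) = (1 / a) * x ^ (-α) := by
        rw [Real.mul_rpow hb0.le hx.le, Real.rpow_neg hb0.le, ha, one_div]
      have hFx : F x = Real.exp (-(x ^ (-α) * h (Real.log x))) := by
        rw [hFdef x, if_pos hx]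
      have hFbx : F (b * x) = Real.exp (-((1 / a) * (x ^ (-α) * h (Real.log x)))) := by
        rw [hFdef (b * x), if_pos hbx, hlog, hper, hrw]; ring_nf
      beta_reduce
      rw [hFx, hFbx, Real.rpow_def_of_pos (Real.exp_pos _), Real.log_exp, ← Real.exp_add]
      congr 1
      rw [hcdef]
      field_simp [ha0.ne']
      ring
    · have hbx : ¬ 0 < b * x := by
        push_neg at hx ⊢
        exact mul_nonpos_iff.mpr (Or.inl ⟨hb0.le, hx⟩)
      rw [hFdef x, if_neg hx, hFdef (b * x), if_neg hbx, zero_mul]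
  · intro x
    by_cases hx : 0 < x
    · beta_reduce
      rw [hFdef x, if_pos hx, if_pos hx, Real.rpow_def_of_pos (Real.exp_pos _), Real.log_exp]
      ring_nf
    · beta_reduce
      rw [hFdef x, if_neg hx, if_neg hx, Real.zero_rpow hc.ne']
end

section
/- A max-semi-stable distribution function of extended Weibull type, F(x) = exp(−|x|^α h(ln|x|)) for x < 0 (and F(x) = 1 for x ≥ 0), where h is positive, bounded, periodic with period |ln b|, 0 < b < 1, α > 0 and a·b^α = 1 with a > 1, satisfies F(x) = F(bx)·H(x) for all x where H(x) = F(x)^(1−1/a) is a distribution function. -/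
open Filter

theorem stmt4 (h : ℝ → ℝ) (a b α : ℝ) (hb0 : 0 < b) (hb1 : b < 1) (hα : 0 < α)
    (ha : 1 < a) (hab : a * b ^ α = 1)
    (hpos : ∀ y : ℝ, 0 < h y) (hbdd : ∃ M : ℝ, ∀ y : ℝ, h y ≤ M)
    (hper : ∀ y : ℝ, h (y + (-(Real.log b))) = h y)
    (F : ℝ → ℝ)
    (hFdef : ∀ x : ℝ, F x = if x < 0 then Real.exp (-(|x| ^ α * h (Real.log |x|))) else 1)
    (hF : IsDF F) :
    ∃ H : ℝ → ℝ, IsDF H ∧ (∀ x : ℝ, F x = F (b * x) * H x) ∧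
      (∀ x : ℝ, H x = F x ^ (1 - 1 / a)) := by
  set c : ℝ := 1 - 1 / a with hc_def
  have ha0 : (0 : ℝ) < a := lt_trans one_pos ha
  have hc : 0 < c := by
    rw [hc_def, sub_pos, div_lt_one ha0]; exact ha
  have hFnn : ∀ x, 0 ≤ F x := by
    intro x
    rw [hFdef x]
    split
    · exact (Real.exp_pos _).le
    · exact zero_le_one
  refine ⟨fun x => F x ^ c, ⟨?_, ?_, ?_, ?_⟩, ?_, fun x => rfl⟩
  · intro x y hxy
    exact Real.rpow_le_rpow (hFnn x) (hF.1 hxy) hc.le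
  · intro x
    exact (Real.continuousAt_rpow_const (F x) c (Or.inr hc.le)).comp_continuousWithinAt
      (hF.2.1 x)
  · have := ((Real.continuousAt_rpow_const 0 c (Or.inr hc.le)).tendsto).comp hF.2.2.1
    simpa [Real.zero_rpow hc.ne', Function.comp_def] using this
  · have := ((Real.continuousAt_rpow_const 1 c (Or.inr hc.le)).tendsto).comp hF.2.2.2
    simpa [Real.one_rpow, Function.comp_def] using this
  · intro x
    have hbα : b ^ α = 1 / a := by
      field_simp
      linarith [hab]
    rcases lt_or_ge x 0 with hx | hx
    · have hbx : b * x < 0 := mul_neg_of_pos_of_neg hb0 hx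
      have habs : |b * x| = b * |x| := by
        rw [abs_mul, abs_of_pos hb0]
      have hxabs : 0 < |x| := abs_pos.2 hx.ne
      have hlog : Real.log |b * x| = Real.log |x| + Real.log b := by
        rw [habs, Real.log_mul hb0.ne' hxabs.ne']; ring
      have hh : h (Real.log |b * x|) = h (Real.log |x|) := by
        rw [hlog]
        have := hper (Real.log |x| + Real.log b)
        simpa using this.symm
      have hpow : |b * x| ^ α = b ^ α * |x| ^ α := by
        rw [habs, Real.mul_rpow hb0.le (abs_nonneg x)]
      set T : ℝ := |x| ^ α * h (Real.log |x|) with hT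
      have hFx : F x = Real.exp (-T) := by rw [hFdef x, if_pos hx]
      have hFbx : F (b * x) = Real.exp (-(b ^ α * T)) := by
        rw [hFdef (b * x), if_pos hbx, hh, hpow, hT]; ring_nf
      show F x = F (b * x) * F x ^ c
      rw [hFx, hFbx, ← Real.exp_mul, ← Real.exp_add]
      congr 1
      rw [hbα, hc_def]
      ring
    · have hbx : ¬ (b * x < 0) := not_lt.2 (mul_nonneg hb0.le hx)
      have h1 : F x = 1 := by rw [hFdef x, if_neg (not_lt.2 hx)]
      have h2 : F (b * x) = 1 := by rw [hFdef (b * x), if_neg hbx]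
      show F x = F (b * x) * F x ^ c
      rw [h1, h2, Real.one_rpow, mul_one]
end

section
/- Suppose G is a distribution function satisfying G(b u)^{b^α} = G(u) for all u, with b > 1, α > 0, and G nondegenerate with G(u) > 0 for u > 0 and G(u) = 0 for u ≤ 0. Then G(u) = exp(−u^(−α) h(ln u)) for u > 0 where h(y) := −e^{αy} ln G(e^y) is positive and periodic with period ln b; i.e. G is extended Fréchet type max-semi-stable. -/
open Filter

theorem stmt9 (G : ℝ → ℝ) (hG : IsDF G) (b α : ℝ) (hb : 1 < b) (hα : 0 < α)
    (hnd : ¬ ∃ x₀ : ℝ, ∀ x : ℝ, G x = if x < x₀ then 0 else 1)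
    (hpos : ∀ u > (0 : ℝ), 0 < G u) (hzero : ∀ u ≤ (0 : ℝ), G u = 0)
    (heq : ∀ u : ℝ, G (b * u) ^ (b ^ α) = G u) :
    let h : ℝ → ℝ := fun y => -(Real.exp (α * y) * Real.log (G (Real.exp y)))
    (∀ y : ℝ, 0 < h y) ∧ (∀ y : ℝ, h (y + Real.log b) = h y) ∧
      (∀ u > (0 : ℝ), G u = Real.exp (-(u ^ (-α) * h (Real.log u)))) := by
  intro h
  obtain ⟨hmono, hrc, hbot, htop⟩ := hG
  have hbpos : (0:ℝ) < b := lt_trans one_pos hb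
  have hle1 : ∀ x, G x ≤ 1 := fun x => hmono.ge_of_tendsto htop x
  -- G u < 1 for u > 0
  have hlt1 : ∀ u > (0:ℝ), G u < 1 := by
    intro u hu
    rcases lt_or_eq_of_le (hle1 u) with h1 | h1
    · exact h1
    exfalso
    have key : ∀ n : ℕ, G (u / b ^ n) = 1 := by
      intro n; induction n with
      | zero => simpa using h1
      | succ n ih =>
        have h2 := heq (u / b ^ (n+1))
        have he : b * (u / b ^ (n+1)) = u / b ^ n := by
          field_simp; ring
        rw [he, ih] at h2
        rw [← h2, Real.one_rpow]
    have hall : ∀ x > (0:ℝ), G x = 1 := by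
      intro x hx
      obtain ⟨n, hn⟩ :=
        ((tendsto_pow_atTop_atTop_of_one_lt hb).eventually_gt_atTop (u / x)).exists
      have hun : u / b ^ n < x := by
        rw [div_lt_iff₀ (pow_pos hbpos n)]
        rw [div_lt_iff₀ hx] at hn
        linarith [hn]
      have h3 := hmono hun.le
      rw [key n] at h3
      exact le_antisymm (hle1 x) h3
    have h0 : G 0 = 0 := hzero 0 le_rfl
    have hc : Tendsto G (nhdsWithin 0 (Set.Ici 0)) (nhds 0) := by
      have := hrc 0
      rwa [ContinuousWithinAt, h0] at this
    have hc' : Tendsto G (nhdsWithin 0 (Set.Ioi 0)) (nhds 0) :=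
      hc.mono_left (nhdsWithin_mono 0 Set.Ioi_subset_Ici_self)
    have hc1 : Tendsto G (nhdsWithin 0 (Set.Ioi 0)) (nhds 1) := by
      apply Tendsto.congr' _ tendsto_const_nhds
      filter_upwards [self_mem_nhdsWithin] with x hx
      exact (hall x hx).symm
    exact zero_ne_one (tendsto_nhds_unique hc' hc1)
  -- log of the functional equation
  have hlog : ∀ u > (0:ℝ), b ^ α * Real.log (G (b * u)) = Real.log (G u) := by
    intro u hu
    have hgbu : 0 < G (b * u) := hpos _ (mul_pos hbpos hu)
    have := congrArg Real.log (heq u)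
    rwa [Real.log_rpow hgbu] at this
  have hlogneg : ∀ u > (0:ℝ), Real.log (G u) < 0 := fun u hu =>
    Real.log_neg (hpos u hu) (hlt1 u hu)
  refine ⟨?_, ?_, ?_⟩
  · intro y
    have he : (0:ℝ) < Real.exp y := Real.exp_pos y
    have := hlogneg _ he
    have := mul_pos (Real.exp_pos (α * y)) (neg_pos.mpr this)
    simp only [h]
    nlinarith
  · intro y
    simp only [h]
    have h1 : Real.exp (y + Real.log b) = b * Real.exp y := by
      rw [Real.exp_add, Real.exp_log hbpos]; ring
    have h2 : Real.exp (α * (y + Real.log b)) = Real.exp (α * y) * b ^ α := by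
      rw [mul_add, Real.exp_add, Real.rpow_def_of_pos hbpos, mul_comm α (Real.log b)]
    rw [h1, h2]
    have := hlog (Real.exp y) (Real.exp_pos y)
    rw [← this]
    ring
  · intro u hu
    simp only [h]
    have h1 : Real.exp (Real.log u) = u := Real.exp_log hu
    have h2 : Real.exp (α * Real.log u) = u ^ α := by
      rw [Real.rpow_def_of_pos hu, mul_comm α (Real.log u)]
    rw [h1, h2]
    have h3 : u ^ (-α) * u ^ α = 1 := by
      rw [← Real.rpow_add hu]; simp
    have h4 : -(u ^ (-α) * -(u ^ α * Real.log (G u))) = Real.log (G u) := by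
      have : u ^ (-α) * (u ^ α * Real.log (G u)) = Real.log (G u) := by
        rw [← mul_assoc, h3, one_mul]
      linarith [this]
    rw [h4, Real.exp_log (hpos u hu)]
end

section
/- Let G be a distribution function, b > 1, α > 0, ρ = 1/b. If the max-AR(1) recursion X_n = ρ X_{n−1} ∨ ε_n with X_0 having d.f. G and i.i.d. innovations ε_n with d.f. u ↦ G(bu)^{b^α − 1} is marginally stationary (X_1 has d.f. G), then G(bu)^{b^α} = G(u) for all u; i.e. the associated extremal process is (b^α, 1/α)-semi-selfsimilar and G is extended Fréchet type max-semi-stable. -/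
open Filter

theorem stmt11 {Ω : Type*} [MeasurableSpace Ω] (μ : MeasureTheory.Measure Ω)
    [MeasureTheory.IsProbabilityMeasure μ]
    (G : ℝ → ℝ) (hG : IsDF G) (b α : ℝ) (hb : 1 < b) (hα : 0 < α)
    (ρ : ℝ) (hρ : ρ = 1 / b)
    (X ε : ℕ → Ω → ℝ)
    (hXmeas : ∀ n, Measurable (X n)) (hεmeas : ∀ n, Measurable (ε n))
    (hrec : ∀ n : ℕ, X (n + 1) = fun ω => max (ρ * X n ω) (ε (n + 1) ω))
    (hεdf : ∀ n : ℕ, 1 ≤ n → ∀ u : ℝ, (μ {ω | ε n ω ≤ u}).toReal = G (b * u) ^ (b ^ α - 1))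
    (hεind : ∀ m n : ℕ, m ≠ n → ProbabilityTheory.IndepFun (ε m) (ε n) μ)
    (hind : ∀ n : ℕ, ProbabilityTheory.IndepFun (X n) (ε (n + 1)) μ)
    (hX0 : ∀ x : ℝ, (μ {ω | X 0 ω ≤ x}).toReal = G x)
    (hstat : ∀ x : ℝ, (μ {ω | X 1 ω ≤ x}).toReal = G x) :
    ∀ u : ℝ, G (b * u) ^ (b ^ α) = G u := by
  intro u
  have hb0 : (0:ℝ) < b := lt_trans one_pos hb
  have hρ0 : (0:ℝ) < ρ := by rw [hρ]; positivity
  have hGnn : 0 ≤ G (b * u) := by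
    rw [← hX0 (b * u)]; exact ENNReal.toReal_nonneg
  -- the key set identity
  have hset : {ω | X 1 ω ≤ u} = (X 0) ⁻¹' Set.Iic (b * u) ∩ (ε 1) ⁻¹' Set.Iic u := by
    ext ω
    simp only [hrec 0, Set.mem_setOf_eq, Set.mem_inter_iff, Set.mem_preimage, Set.mem_Iic,
      max_le_iff]
    constructor
    · rintro ⟨h1, h2⟩
      refine ⟨?_, h2⟩
      have : X 0 ω ≤ u / ρ := (le_div_iff₀' hρ0).mpr h1
      rwa [hρ, div_div_eq_mul_div, div_one, mul_comm] at this
    · rintro ⟨h1, h2⟩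
      refine ⟨?_, h2⟩
      calc ρ * X 0 ω ≤ ρ * (b * u) := by nlinarith
        _ = u := by rw [hρ]; field_simp
  have hi := (hind 0).measure_inter_preimage_eq_mul (Set.Iic (b * u)) (Set.Iic u)
    measurableSet_Iic measurableSet_Iic
  have hGu : G u = G (b * u) * G (b * u) ^ (b ^ α - 1) := by
    rw [← hstat u, hset, hi, ENNReal.toReal_mul]
    congr 1
    · exact hX0 (b * u)
    · exact hεdf 1 le_rfl u
  have hne : (1:ℝ) + (b ^ α - 1) ≠ 0 := by
    have : (1:ℝ) < b ^ α := Real.one_lt_rpow_iff_of_pos hb0 |>.mpr (Or.inl ⟨hb, hα⟩)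
    intro h; linarith
  calc G (b * u) ^ (b ^ α) = G (b * u) ^ ((1:ℝ) + (b ^ α - 1)) := by ring_nf
    _ = G (b * u) ^ (1:ℝ) * G (b * u) ^ (b ^ α - 1) := Real.rpow_add' hGnn hne
    _ = G u := by rw [Real.rpow_one, ← hGu]
end

section
/- Let G be the d.f. of Y(1) for an extremal process with stationary max-increments satisfying G(bu)^{b^{−α}} = G(u) for all u (with 0 < b < 1, α > 0). Define X_0 with d.f. G, and let innovations ε_n be i.i.d. with d.f. u ↦ G(bu)^{b^{−α} − 1}. Then the max-AR(1) recursion X_n = ρ X_{n−1} ∨ ε_n with ρ = 1/b is marginally stationary: every X_n has distribution function G. -/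
open Filter

theorem stmt12 {Ω : Type*} [MeasurableSpace Ω] (μ : MeasureTheory.Measure Ω)
    [MeasureTheory.IsProbabilityMeasure μ]
    (G : ℝ → ℝ) (hG : IsDF G) (b α : ℝ) (hb0 : 0 < b) (hb1 : b < 1) (hα : 0 < α)
    (heq : ∀ u : ℝ, G (b * u) ^ (b ^ (-α)) = G u)
    (ρ : ℝ) (hρ : ρ = 1 / b)
    (X ε : ℕ → Ω → ℝ)
    (hXmeas : ∀ n, Measurable (X n)) (hεmeas : ∀ n, Measurable (ε n))
    (hrec : ∀ n : ℕ, X (n + 1) = fun ω => max (ρ * X n ω) (ε (n + 1) ω))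
    (hεdf : ∀ n : ℕ, 1 ≤ n → ∀ u : ℝ,
      (μ {ω | ε n ω ≤ u}).toReal = G (b * u) ^ (b ^ (-α) - 1))
    (hεind : ∀ m n : ℕ, m ≠ n → ProbabilityTheory.IndepFun (ε m) (ε n) μ)
    (hind : ∀ n : ℕ, ProbabilityTheory.IndepFun (X n) (ε (n + 1)) μ)
    (hX0 : ∀ x : ℝ, (μ {ω | X 0 ω ≤ x}).toReal = G x) :
    ∀ n : ℕ, ∀ x : ℝ, (μ {ω | X n ω ≤ x}).toReal = G x := by
  have hGnn : ∀ x, 0 ≤ G x := by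
    intro x
    refine le_of_tendsto hG.2.2.1 ?_
    filter_upwards [eventually_le_atBot x] with y hy
    exact hG.1 hy
  have hc1 : 1 < b ^ (-α) := by
    have := Real.rpow_lt_rpow_of_exponent_gt hb0 hb1 (neg_lt_zero.2 hα)
    simpa using this
  intro n
  induction n with
  | zero => exact hX0
  | succ n ih =>
    intro x
    have hset : {ω | X (n + 1) ω ≤ x} =
        X n ⁻¹' Set.Iic (b * x) ∩ ε (n + 1) ⁻¹' Set.Iic x := by
      ext ω
      simp only [hrec n, Set.mem_setOf_eq, Set.mem_inter_iff, Set.mem_preimage,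
        Set.mem_Iic, max_le_iff]
      constructor
      · rintro ⟨h1, h2⟩
        refine ⟨?_, h2⟩
        rw [hρ, one_div, inv_mul_le_iff₀ hb0] at h1
        exact h1
      · rintro ⟨h1, h2⟩
        refine ⟨?_, h2⟩
        rw [hρ, one_div, inv_mul_le_iff₀ hb0]
        exact h1
    have hmul := (hind n).measure_inter_preimage_eq_mul (Set.Iic (b * x)) (Set.Iic x)
      measurableSet_Iic measurableSet_Iic
    have hX := ih (b * x)
    have hε := hεdf (n + 1) (by omega) x
    have hXset : X n ⁻¹' Set.Iic (b * x) = {ω | X n ω ≤ b * x} := rfl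
    have hεset : ε (n + 1) ⁻¹' Set.Iic x = {ω | ε (n + 1) ω ≤ x} := rfl
    rw [hset, hmul, ENNReal.toReal_mul, hXset, hεset, hX, hε]
    rcases eq_or_lt_of_le (hGnn (b * x)) with h0 | hpos
    · rw [← h0, Real.zero_rpow (by linarith), mul_zero, ← heq x, ← h0,
        Real.zero_rpow (by linarith)]
    · rw [← heq x, ← Real.rpow_one_add' (le_of_lt hpos) (by linarith)]
      ring_nf
end

section
/- If the max-AR(1) recursion X_n = ρ X_{n−1} ∨ ε_n with ρ = 1/b (0 < b < 1), X_0 with d.f. G and i.i.d. innovations with d.f. u ↦ G(bu)^{b^{−α} − 1} is marginally stationary, then G(bu)^{b^{−α}} = G(u) for all u, so G is extended Weibull type max-semi-stable and the extremal process with Y(1) =_d G is (b^{−α}, −1/α)-semi-selfsimilar. -/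
open Filter

theorem stmt13 {Ω : Type*} [MeasurableSpace Ω] (μ : MeasureTheory.Measure Ω)
    [MeasureTheory.IsProbabilityMeasure μ]
    (G : ℝ → ℝ) (hG : IsDF G) (b α : ℝ) (hb0 : 0 < b) (hb1 : b < 1) (hα : 0 < α)
    (ρ : ℝ) (hρ : ρ = 1 / b)
    (X ε : ℕ → Ω → ℝ)
    (hXmeas : ∀ n, Measurable (X n)) (hεmeas : ∀ n, Measurable (ε n))
    (hrec : ∀ n : ℕ, X (n + 1) = fun ω => max (ρ * X n ω) (ε (n + 1) ω))
    (hεdf : ∀ n : ℕ, 1 ≤ n → ∀ u : ℝ,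
      (μ {ω | ε n ω ≤ u}).toReal = G (b * u) ^ (b ^ (-α) - 1))
    (hεind : ∀ m n : ℕ, m ≠ n → ProbabilityTheory.IndepFun (ε m) (ε n) μ)
    (hind : ∀ n : ℕ, ProbabilityTheory.IndepFun (X n) (ε (n + 1)) μ)
    (hX0 : ∀ x : ℝ, (μ {ω | X 0 ω ≤ x}).toReal = G x)
    (hstat : ∀ x : ℝ, (μ {ω | X 1 ω ≤ x}).toReal = G x) :
    ∀ u : ℝ, G (b * u) ^ (b ^ (-α)) = G u := by
  intro u
  have hρpos : 0 < ρ := by rw [hρ]; positivity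
  -- the event {X 1 ≤ u} splits
  have hset : {ω | X 1 ω ≤ u} = X 0 ⁻¹' (Set.Iic (b * u)) ∩ ε 1 ⁻¹' (Set.Iic u) := by
    ext ω
    have h1 : X 1 ω = max (ρ * X 0 ω) (ε 1 ω) := by rw [hrec 0]
    simp only [Set.mem_setOf_eq, Set.mem_inter_iff, Set.mem_preimage, Set.mem_Iic, h1,
      max_le_iff]
    constructor
    · rintro ⟨h1, h2⟩
      refine ⟨?_, h2⟩
      have := (le_div_iff₀' hρpos).mpr h1
      calc X 0 ω ≤ u / ρ := this
        _ = b * u := by rw [hρ]; field_simp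
    · rintro ⟨h1, h2⟩
      refine ⟨?_, h2⟩
      have : ρ * X 0 ω ≤ ρ * (b * u) := by
        exact mul_le_mul_of_nonneg_left h1 hρpos.le
      calc ρ * X 0 ω ≤ ρ * (b * u) := this
        _ = u := by rw [hρ]; field_simp
  have hmul := (hind 0).measure_inter_preimage_eq_mul (Set.Iic (b * u)) (Set.Iic u)
      measurableSet_Iic measurableSet_Iic
  have hfin1 : μ (X 0 ⁻¹' (Set.Iic (b * u))) ≠ ⊤ := MeasureTheory.measure_ne_top μ _
  have hfin2 : μ (ε 1 ⁻¹' (Set.Iic u)) ≠ ⊤ := MeasureTheory.measure_ne_top μ _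
  have key : G u = G (b * u) * G (b * u) ^ (b ^ (-α) - 1) := by
    rw [← hstat u]
    have : {ω | X 1 ω ≤ u} = X 0 ⁻¹' (Set.Iic (b * u)) ∩ ε 1 ⁻¹' (Set.Iic u) := hset
    rw [this, hmul, ENNReal.toReal_mul]
    congr 1
    · exact hX0 (b * u)
    · exact hεdf 1 le_rfl u
  have hGnn : 0 ≤ G (b * u) := by
    refine le_of_tendsto hG.2.2.1 ?_
    filter_upwards [eventually_le_atBot (b * u)] with y hy using hG.1 hy
  have hepos : 0 < b ^ (-α) := Real.rpow_pos_of_pos hb0 _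
  rcases eq_or_lt_of_le hGnn with h0 | hpos
  · rw [key, ← h0]
    rw [Real.zero_rpow hepos.ne', Real.zero_rpow]
    · ring
    · intro hc
      have : b ^ (-α) = 1 := by linarith [sub_eq_zero.mp hc]
      have hne : b ^ (-α) ≠ 1 := by
        have : 1 < b ^ (-α) := by
          rw [Real.rpow_neg hb0.le]
          rw [lt_inv_comm₀ one_pos (Real.rpow_pos_of_pos hb0 α)]
          simpa using Real.rpow_lt_one hb0.le hb1 hα
        linarith
      exact hne this
  · rw [key]
    rw [← Real.rpow_one_add' (le_of_lt hpos) (by intro hc; nlinarith [hpos])]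
    ring_nf
end
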